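/- arXiv:2411.02001 — 5 statements merged into one kernel-verified Lean document; each statement's English description precedes it below -/
import Mathlib

section
/- Consider an $L$-layer linear network with weights $W_1, \dots, W_L$ and positive inference step sizes $\gamma_1, \dots, \gamma_L$. Define the free energy $F(v_1,\dots,v_{L-1}) = \frac{\gamma_L}{2}\|y - W_L v_{L-1}\|^2 + \sum_{l=1}^{L-1} \frac{\gamma_l}{2}\|v_l - W_l v_{l-1}\|^2$ with $v_0 = x$ fixed. Suppose $(v_1^*, \dots, v_{L-1}^*)$ is a critical point of $F$ (all partial derivatives vanish). Let $e_l^* = v_l^* - W_l v_{l-1}^*$ for $l < L$, $e_L^* = y - W_L v_{L-1}^*$, $W_{L:i} = W_L W_{L-1} \cdots W_i$, and $C_\gamma = \sum_{i=2}^{L} \frac{\gamma_L}{\gamma_{i-1}} W_{L:i} W_{L:i}^\top$. Then, assuming $I + C_\gamma$ is invertible, $e_L^* = (I + C_\gamma)^{-1}(y - W_{L:1}x)$. -/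
open Matrix Finset

/-- The matrix chain `W_{j:i} = W j * W (j-1) * ⋯ * W i` (identity when `i > j`). -/
noncomputable def Wch {d : ℕ} (W : ℕ → Matrix (Fin d) (Fin d) ℝ) (i j : ℕ) :
    Matrix (Fin d) (Fin d) ℝ :=
  ((List.range (j + 1 - i)).map fun k => W (j - k)).prod

lemma Wch_gt {d : ℕ} (W : ℕ → Matrix (Fin d) (Fin d) ℝ) {i j : ℕ} (h : j < i) :
    Wch W i j = 1 := by
  unfold Wch
  have : j + 1 - i = 0 := by omega
  simp [this]

lemma Wch_succ_right {d : ℕ} (W : ℕ → Matrix (Fin d) (Fin d) ℝ) {i j : ℕ} (h : i ≤ j) :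
    Wch W i j = Wch W (i+1) j * W i := by
  unfold Wch
  have h1 : j + 1 - i = (j + 1 - (i+1)) + 1 := by omega
  rw [h1, List.range_succ, List.map_append, List.prod_append]
  have h3 : j - (j - i) = i := by omega
  simp [h3]

lemma sum_mulVec_aux {d : ℕ} (s : Finset ℕ) (f : ℕ → Matrix (Fin d) (Fin d) ℝ)
    (x : Fin d → ℝ) : (∑ i ∈ s, f i) *ᵥ x = ∑ i ∈ s, f i *ᵥ x := by
  induction s using Finset.cons_induction with
  | empty => simp [Matrix.zero_mulVec]
  | cons a s ha ih =>
    rw [Finset.sum_cons, Finset.sum_cons, Matrix.add_mulVec, ih]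

lemma Wch_succ_left {d : ℕ} (W : ℕ → Matrix (Fin d) (Fin d) ℝ) {i j : ℕ}
    (hi : 1 ≤ i) (h : i ≤ j) :
    Wch W i j = W j * Wch W i (j-1) := by
  unfold Wch
  have h1 : j + 1 - i = (j - 1 + 1 - i) + 1 := by omega
  rw [h1, List.range_succ_eq_map, List.map_cons, List.prod_cons, Nat.sub_zero, List.map_map]
  congr 1
  apply congrArg
  apply List.map_congr_left
  intro k _
  have hk2 : j - (k+1) = j - 1 - k := by omega
  show W (j - (k+1)) = W (j - 1 - k)
  rw [hk2]

/-- **Last-layer error at the PC inference fixed point (linear network).**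
At a critical point of the free energy
`F(v) = γ_L/2 ‖y - W_L v_{L-1}‖² + ∑_{l<L} γ_l/2 ‖v_l - W_l v_{l-1}‖²` (with `v 0 = x`),
assuming `I + C_γ` is invertible, the last-layer error satisfies
`e_L = (I + C_γ)⁻¹ (y - W_{L:1} x)`. -/
theorem pc_fixed_point_last_layer_error (d L : ℕ) (hL : 2 ≤ L)
    (W : ℕ → Matrix (Fin d) (Fin d) ℝ)
    (γ : ℕ → ℝ) (hγ : ∀ l, 1 ≤ l → l ≤ L → 0 < γ l)
    (x y : Fin d → ℝ) (v : ℕ → Fin d → ℝ) (hv0 : v 0 = x)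
    (e : ℕ → Fin d → ℝ)
    (he : ∀ l, 1 ≤ l → l ≤ L - 1 → e l = v l - W l *ᵥ v (l - 1))
    (heL : e L = y - W L *ᵥ v (L - 1))
    (hcrit : ∀ l, 1 ≤ l → l ≤ L - 1 →
      γ l • e l = γ (l + 1) • ((W (l + 1))ᵀ *ᵥ e (l + 1)))
    (C : Matrix (Fin d) (Fin d) ℝ)
    (hC : C = ∑ i ∈ Finset.Icc 2 L, (γ L / γ (i - 1)) • (Wch W i L * (Wch W i L)ᵀ))
    (hinv : IsUnit ((1 : Matrix (Fin d) (Fin d) ℝ) + C)) :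
    e L = ((1 : Matrix (Fin d) (Fin d) ℝ) + C)⁻¹ *ᵥ (y - Wch W 1 L *ᵥ x) := by
  have hne : ∀ l, 1 ≤ l → l ≤ L → γ l ≠ 0 := fun l h1 h2 => ne_of_gt (hγ l h1 h2)
  -- error propagation
  have key : ∀ n l, 1 ≤ l → l + n = L →
      e l = (γ L / γ l) • ((Wch W (l+1) L)ᵀ *ᵥ e L) := by
    intro n
    induction n with
    | zero =>
      intro l hl1 hlL
      simp only [Nat.add_zero] at hlL
      subst hlL
      rw [Wch_gt W (by omega), Matrix.transpose_one, Matrix.one_mulVec,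
        div_self (hne l hl1 le_rfl), one_smul]
    | succ n ih =>
      intro l hl1 hlL
      have h1 : l ≤ L - 1 := by omega
      have hc := hcrit l hl1 h1
      have hih := ih (l+1) (by omega) (by omega)
      rw [hih] at hc
      have hWr : Wch W (l+1) L = Wch W (l+2) L * W (l+1) :=
        Wch_succ_right W (by omega)
      have : e l = (γ l)⁻¹ • (γ l • e l) := by
        rw [smul_smul, inv_mul_cancel₀ (hne l hl1 (by omega)), one_smul]
      rw [this, hc, hWr, Matrix.transpose_mul, ← Matrix.mulVec_mulVec,
        Matrix.mulVec_smul, smul_smul, smul_smul]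
      have h2 : γ (l+1) ≠ 0 := hne (l+1) (by omega) (by omega)
      congr 1
      rw [mul_assoc, mul_comm (γ (l+1)), div_mul_cancel₀ _ h2, inv_mul_eq_div]
  -- telescoping
  have tel : ∀ m, m ≤ L - 1 →
      Wch W (m+1) L *ᵥ v m =
        Wch W 1 L *ᵥ x + ∑ l ∈ Finset.Icc 1 m, Wch W (l+1) L *ᵥ e l := by
    intro m
    induction m with
    | zero =>
      intro _
      simp [hv0]
    | succ m ih =>
      intro hm
      have hvm : v (m+1) = e (m+1) + W (m+1) *ᵥ v m := by
        have := he (m+1) (by omega) hm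
        rw [this]; funext i; simp only [Nat.add_sub_cancel, Pi.add_apply, Pi.sub_apply]; ring
      have hWr : Wch W (m+2) L = Wch W (m+2) L := rfl
      have hchain : Wch W (m+2) L * W (m+1) = Wch W (m+1) L :=
        (Wch_succ_right W (by omega : m+1 ≤ L)).symm
      rw [hvm, Matrix.mulVec_add, Matrix.mulVec_mulVec, hchain, ih (by omega),
        Finset.sum_Icc_succ_top (by omega : 1 ≤ m+1)]
      abel
  -- assemble
  have hWLL : Wch W L L = W L := by
    rw [Wch_succ_left W (by omega : 1 ≤ L) le_rfl, Wch_gt W (by omega)]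
    simp
  have htel := tel (L-1) le_rfl
  have hL1 : L - 1 + 1 = L := by omega
  rw [hL1, hWLL] at htel
  have hmain : ((1 : Matrix (Fin d) (Fin d) ℝ) + C) *ᵥ e L = y - Wch W 1 L *ᵥ x := by
    have hS : ∑ l ∈ Finset.Icc 1 (L-1), Wch W (l+1) L *ᵥ e l = C *ᵥ e L := by
      rw [hC, sum_mulVec_aux]
      refine Finset.sum_nbij' (fun l => l + 1) (fun i => i - 1) ?_ ?_ ?_ ?_ ?_
      · intro a ha; simp only [Finset.mem_Icc] at ha ⊢; omega
      · intro a ha; simp only [Finset.mem_Icc] at ha ⊢; omega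
      · intro a ha; show a + 1 - 1 = a; omega
      · intro a ha; simp only [Finset.mem_Icc] at ha; show a - 1 + 1 = a; omega
      · intro l hl
        simp only [Finset.mem_Icc] at hl
        rw [key (L - l) l hl.1 (by omega)]
        simp only [Nat.add_sub_cancel]
        rw [Matrix.mulVec_smul, Matrix.smul_mulVec, Matrix.mulVec_mulVec]
    rw [Matrix.add_mulVec, Matrix.one_mulVec, ← hS, heL, htel]
    funext i
    simp only [Pi.add_apply, Pi.sub_apply]
    ring
  have hdet : IsUnit ((1 : Matrix (Fin d) (Fin d) ℝ) + C).det :=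
    (Matrix.isUnit_iff_isUnit_det _).mp hinv
  rw [← hmain, Matrix.mulVec_mulVec, Matrix.nonsing_inv_mul _ hdet, Matrix.one_mulVec]
end

section
/- For a shallow linear network ($L = 2$), at the PC inference fixed point the input-layer error equals a damped Gauss-Newton target: $e_1^* = \frac{\gamma_2}{\gamma_1} W_2^\top \left(I + \frac{\gamma_2}{\gamma_1} W_2 W_2^\top\right)^{-1} (y - W_2 W_1 x)$, which can be rewritten as $e_1^* = \left(W_2^\top W_2 + \frac{\gamma_1}{\gamma_2} I\right)^{-1} W_2^\top (y - W_2 W_1 x)$. -/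
/-!
At the fixed point the error `e₁ = v₁ - W₁x` solves the damped normal equation
`(W₂ᵀW₂ + (γ₁/γ₂) I) e₁ = W₂ᵀ r` with `r = y - W₂W₁x`, whose matrix is positive definite; this is
the second form. The first follows from the push-through identity
`Wᵀ (I + c WWᵀ) = c (WᵀW + c⁻¹ I) Wᵀ`, which after inverting both factors moves the inverse from
the parameter space `d₁` to the output space `d₂`.
-/

open Matrix

namespace Matrix

variable {m n K : Type*} [Fintype m] [Fintype n] [Field K]

theorem posDef_transpose_mul_self_add_smul_one [DecidableEq n] (W : Matrix m n ℝ) {c : ℝ}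
    (hc : 0 < c) :
    (Wᵀ * W + c • (1 : Matrix n n ℝ)).PosDef := by
  have hWW : (Wᵀ * W).PosSemidef := by
    simpa only [conjTranspose_eq_transpose_of_trivial] using posSemidef_conjTranspose_mul_self W
  exact PosDef.posSemidef_add hWW (PosDef.one.smul hc)

theorem posDef_one_add_smul_mul_transpose_self [DecidableEq m] (W : Matrix m n ℝ) {c : ℝ}
    (hc : 0 ≤ c) :
    ((1 : Matrix m m ℝ) + c • (W * Wᵀ)).PosDef := by
  have hWW : (W * Wᵀ).PosSemidef := by
    simpa only [conjTranspose_eq_transpose_of_trivial] using posSemidef_self_mul_conjTranspose W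
  exact PosDef.one.add_posSemidef (hWW.smul hc)

theorem transpose_mul_one_add_smul_mul_transpose_self [DecidableEq m] [DecidableEq n]
    (W : Matrix m n K) {c : K} (hc : c ≠ 0) :
    Wᵀ * (1 + c • (W * Wᵀ)) = c • ((Wᵀ * W + c⁻¹ • 1) * Wᵀ) := by
  simp only [Matrix.mul_add, Matrix.add_mul, Matrix.mul_one, Matrix.one_mul, Matrix.mul_smul,
    Matrix.smul_mul, smul_add, smul_smul, mul_inv_cancel₀ hc, one_smul, Matrix.mul_assoc]
  exact add_comm _ _

theorem inv_transpose_mul_self_add_smul_one_mul_transpose [DecidableEq m] [DecidableEq n]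
    (W : Matrix m n K) {c : K} (hc : c ≠ 0)
    (hA : IsUnit (Wᵀ * W + c⁻¹ • (1 : Matrix n n K)).det)
    (hB : IsUnit ((1 : Matrix m m K) + c • (W * Wᵀ)).det) :
    (Wᵀ * W + c⁻¹ • 1)⁻¹ * Wᵀ = c • (Wᵀ * (1 + c • (W * Wᵀ))⁻¹) := by
  set A := Wᵀ * W + c⁻¹ • (1 : Matrix n n K)
  set B := (1 : Matrix m m K) + c • (W * Wᵀ)
  calc A⁻¹ * Wᵀ = A⁻¹ * (Wᵀ * B) * B⁻¹ := by
        rw [Matrix.mul_assoc, Matrix.mul_assoc, mul_nonsing_inv B hB, Matrix.mul_one]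
    _ = c • (Wᵀ * B⁻¹) := by
        rw [transpose_mul_one_add_smul_mul_transpose_self W hc, Matrix.mul_smul, Matrix.smul_mul,
          ← Matrix.mul_assoc, nonsing_inv_mul A hA, Matrix.one_mul]

/-- A stationary point of `γ₂/2 ‖r - W e‖² + γ₁/2 ‖e‖²` solves the damped normal equation. -/
theorem transpose_mul_self_add_smul_one_mulVec_of_stationary [DecidableEq n] (W : Matrix m n K)
    {γ₁ γ₂ : K} (hγ₂ : γ₂ ≠ 0) {r : m → K} {e : n → K} (h : γ₂ • (Wᵀ *ᵥ (r - W *ᵥ e)) = γ₁ • e) :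
    (Wᵀ * W + (γ₁ / γ₂) • 1) *ᵥ e = Wᵀ *ᵥ r := by
  have h' : Wᵀ *ᵥ r - (Wᵀ * W) *ᵥ e = (γ₁ / γ₂) • e := by
    rw [← mulVec_mulVec, ← mulVec_sub, div_eq_inv_mul, ← smul_smul, ← h, smul_smul,
      inv_mul_cancel₀ hγ₂, one_smul]
  rw [add_mulVec, smul_mulVec, one_mulVec, ← h']
  abel

end Matrix

/-- **Shallow (L = 2) PC fixed point equals a damped Gauss-Newton target.**
If `v₁` satisfies the inference fixed-point equation
`γ₂ W₂ᵀ (y - W₂ v₁) = γ₁ (v₁ - W₁ x)`, then the input-layer error `e₁ = v₁ - W₁ x` equals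
`(γ₂/γ₁) W₂ᵀ (I + (γ₂/γ₁) W₂W₂ᵀ)⁻¹ (y - W₂W₁x)`, which can be rewritten as
`(W₂ᵀW₂ + (γ₁/γ₂) I)⁻¹ W₂ᵀ (y - W₂W₁x)`. -/
theorem shallow_pc_is_damped_gauss_newton (d0 d1 d2 : ℕ)
    (W1 : Matrix (Fin d1) (Fin d0) ℝ) (W2 : Matrix (Fin d2) (Fin d1) ℝ)
    (γ1 γ2 : ℝ) (hγ1 : 0 < γ1) (hγ2 : 0 < γ2)
    (x : Fin d0 → ℝ) (y : Fin d2 → ℝ) (v1 : Fin d1 → ℝ)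
    (hcrit : γ2 • (W2ᵀ *ᵥ (y - W2 *ᵥ v1)) = γ1 • (v1 - W1 *ᵥ x))
    (e1 : Fin d1 → ℝ) (he1 : e1 = v1 - W1 *ᵥ x) :
    e1 = (γ2 / γ1) • (W2ᵀ *ᵥ
        (((1 : Matrix (Fin d2) (Fin d2) ℝ) + (γ2 / γ1) • (W2 * W2ᵀ))⁻¹ *ᵥ
          (y - W2 *ᵥ (W1 *ᵥ x)))) ∧
    e1 = (W2ᵀ * W2 + (γ1 / γ2) • (1 : Matrix (Fin d1) (Fin d1) ℝ))⁻¹ *ᵥ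
        (W2ᵀ *ᵥ (y - W2 *ᵥ (W1 *ᵥ x))) := by
  have hA := (isUnit_iff_isUnit_det _).1
    (posDef_transpose_mul_self_add_smul_one W2 (div_pos hγ1 hγ2)).isUnit
  have hB := (isUnit_iff_isUnit_det _).1
    (posDef_one_add_smul_mul_transpose_self W2 (div_pos hγ2 hγ1).le).isUnit
  have hresidual : y - W2 *ᵥ (W1 *ᵥ x) - W2 *ᵥ e1 = y - W2 *ᵥ v1 := by
    rw [he1, mulVec_sub]
    abel
  have hnormal := transpose_mul_self_add_smul_one_mulVec_of_stationary W2 hγ2.ne'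
    (r := y - W2 *ᵥ (W1 *ᵥ x)) (by rw [hresidual, hcrit, he1])
  have hsolve : e1 = (W2ᵀ * W2 + (γ1 / γ2) • 1)⁻¹ *ᵥ (W2ᵀ *ᵥ (y - W2 *ᵥ (W1 *ᵥ x))) := by
    rw [← hnormal, mulVec_mulVec, nonsing_inv_mul _ hA, one_mulVec]
  have hpush := inv_transpose_mul_self_add_smul_one_mul_transpose W2 (div_pos hγ2 hγ1).ne'
    (by rwa [inv_div]) hB
  rw [inv_div] at hpush
  refine ⟨?_, hsolve⟩
  rw [hsolve, mulVec_mulVec, hpush, smul_mulVec, ← mulVec_mulVec]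
end

section
/- In the one-dimensional output case $M_L = 1$, the PC fixed-point gradient direction coincides with the backpropagation gradient direction: since $C_\gamma = \sum_{i=2}^L \frac{\gamma_L}{\gamma_{i-1}} W_{L:i} W_{L:i}^\top$ is a nonnegative scalar $c \ge 0$ when $M_L = 1$, we have $e_l^* = \frac{\gamma_L}{\gamma_l (1 + c)} W_{L:l+1}^\top (y - W_{L:1}x)$, a positive scalar multiple of the backpropagated error $W_{L:l+1}^\top(y - W_{L:1}x)$. -/
open Matrix Finset

/- For a scalar output the preconditioner `1 + C_γ` is the `1 × 1` matrix `(1 + c)`, so its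
inverse only rescales by `(1 + c)⁻¹`; and `c ≥ 0` because it is a positively weighted sum of
squared norms `W_{L:i} W_{L:i}ᵀ`. -/

/-- The hidden-layer matrix chain `W_{j:i} = W j * W (j-1) * ⋯ * W i` (identity for `i > j`). -/
noncomputable def Hch {d : ℕ} (W : ℕ → Matrix (Fin d) (Fin d) ℝ) (i j : ℕ) :
    Matrix (Fin d) (Fin d) ℝ :=
  ((List.range (j + 1 - i)).map fun k => W (j - k)).prod

theorem Matrix.inv_fin_one_eq {K : Type*} [Field K] (A : Matrix (Fin 1) (Fin 1) K) :
    A⁻¹ = (A 0 0)⁻¹ • 1 := by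
  rw [inv_def, adjugate_fin_one, det_fin_one, Ring.inverse_eq_inv']

theorem Matrix.mul_transpose_self_apply_self_nonneg {m n R : Type*} [Fintype n] [CommRing R]
    [LinearOrder R] [IsStrictOrderedRing R] (A : Matrix m n R) (i : m) :
    0 ≤ (A * Aᵀ) i i := by
  simp only [mul_apply, transpose_apply]
  exact sum_nonneg fun k _ => mul_self_nonneg (A i k)

theorem Matrix.transpose_mulVec_inv_fin_one_mulVec {n K : Type*} [Fintype n] [Field K]
    (V : Matrix (Fin 1) n K) (A : Matrix (Fin 1) (Fin 1) K) (r : Fin 1 → K) :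
    Vᵀ *ᵥ (A⁻¹ *ᵥ r) = (A 0 0)⁻¹ • (Vᵀ *ᵥ r) := by
  rw [inv_fin_one_eq, smul_mulVec, one_mulVec, mulVec_smul]

theorem pc_scalar_output_matches_bp_general (d L : ℕ)
    (γ : ℕ → ℝ) (hγ : ∀ l, 1 ≤ l → l ≤ L → 0 < γ l)
    (x : Fin d → ℝ) (y : Fin 1 → ℝ)
    (V : ℕ → Matrix (Fin 1) (Fin d) ℝ)
    (c : ℝ) (hc : c = ∑ i ∈ Finset.Icc 2 L, (γ L / γ (i - 1)) * ((V i * (V i)ᵀ) 0 0))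
    (C : Matrix (Fin 1) (Fin 1) ℝ)
    (hC : C = ∑ i ∈ Finset.Icc 2 L, (γ L / γ (i - 1)) • (V i * (V i)ᵀ)) :
    0 ≤ c ∧
    ∀ l, 1 ≤ l → l ≤ L - 1 →
      (γ L / γ l) • ((V (l + 1))ᵀ *ᵥ
          (((1 : Matrix (Fin 1) (Fin 1) ℝ) + C)⁻¹ *ᵥ (y - V 1 *ᵥ x))) =
        (γ L / (γ l * (1 + c))) • ((V (l + 1))ᵀ *ᵥ (y - V 1 *ᵥ x)) := by
  have hc_nonneg : 0 ≤ c := hc ▸ sum_nonneg fun i hi => by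
    obtain ⟨h2i, hiL⟩ := mem_Icc.mp hi
    have hweight : 0 < γ L / γ (i - 1) :=
      div_pos (hγ L (by omega) le_rfl) (hγ _ (by omega) (by omega))
    exact mul_nonneg hweight.le (mul_transpose_self_apply_self_nonneg (V i) 0)
  have hC_entry : (1 + C) 0 0 = 1 + c := by
    simp only [hC, hc, Matrix.add_apply, Matrix.sum_apply, Matrix.smul_apply, smul_eq_mul,
      one_apply_eq]
  refine ⟨hc_nonneg, fun l _ _ => ?_⟩
  rw [transpose_mulVec_inv_fin_one_mulVec, hC_entry, smul_smul, ← div_eq_mul_inv,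
    div_div]

/-- **Scalar output (`M_L = 1`): PC fixed-point direction equals the BP direction.**
With output weight `WL : 1 × d` and `V i = W_{L:i} = WL * W_{L-1} ⋯ W_i`, the preconditioner
`C_γ` is the nonnegative scalar `c`, and the fixed-point layer error
`(γ_L/γ_l) • V_{l+1}ᵀ (I + C)⁻¹ (y - V_1 x)` equals
`(γ_L/(γ_l (1+c))) • V_{l+1}ᵀ (y - V_1 x)`, a positive multiple of the BP error. -/
theorem pc_scalar_output_matches_bp (d L : ℕ) (hL : 2 ≤ L)
    (W : ℕ → Matrix (Fin d) (Fin d) ℝ) (WL : Matrix (Fin 1) (Fin d) ℝ)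
    (γ : ℕ → ℝ) (hγ : ∀ l, 1 ≤ l → l ≤ L → 0 < γ l)
    (x : Fin d → ℝ) (y : Fin 1 → ℝ)
    (V : ℕ → Matrix (Fin 1) (Fin d) ℝ) (hV : ∀ i, V i = WL * Hch W i (L - 1))
    (c : ℝ) (hc : c = ∑ i ∈ Finset.Icc 2 L, (γ L / γ (i - 1)) * ((V i * (V i)ᵀ) 0 0))
    (C : Matrix (Fin 1) (Fin 1) ℝ)
    (hC : C = ∑ i ∈ Finset.Icc 2 L, (γ L / γ (i - 1)) • (V i * (V i)ᵀ)) :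
    0 ≤ c ∧
    ∀ l, 1 ≤ l → l ≤ L - 1 →
      (γ L / γ l) • ((V (l + 1))ᵀ *ᵥ
          (((1 : Matrix (Fin 1) (Fin 1) ℝ) + C)⁻¹ *ᵥ (y - V 1 *ᵥ x))) =
        (γ L / (γ l * (1 + c))) • ((V (l + 1))ᵀ *ᵥ (y - V 1 *ᵥ x)) :=
  pc_scalar_output_matches_bp_general d L γ hγ x y V c hc C hC
end

section
/- (Single-shot sequential inference with forward initialization) Consider PC with F-ini ($v_{l,0} = u_{l,0}$, so $e_{l,0} = 0$ for $l < L$) and a single sequential inference sweep from the output layer downward, for a differentiable network. Then the change in hidden state after one sweep satisfies $v_{l,1} - v_{l,0} = -\left(\prod_{i=l+1}^{L} \gamma_i\right)\delta_l$ for all $l < L$, where $\delta_l = \partial u_L / \partial u_l$-type backpropagated signal defined recursively by $\delta_{L-1} = \phi'(v_{L-1,0}) \circ W_L^\top \delta_L$, $\delta_l = \phi'(v_{l,0}) \circ W_{l+1}^\top \delta_{l+1}$, and $\delta_L = -(y - W_L\phi(v_{L-1,0}))$ up to sign. -/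
open Matrix Finset

/-! Both sweeps apply the same linear map `v ↦ φ'(v_{l,0}) ∘ W_{l+1}ᵀ v` at each
layer; they differ only in that the PC sweep multiplies by `γ_{l+1}` at every step and starts from
`-δ_L`. Homogeneity lets these scalars be pulled out, accumulating to `-∏ γ_i`. -/

theorem smul_eq_prod_smul_of_homogeneous_recursion {R M : Type*} [CommMonoid R] [MulAction R M]
    (f : ℕ → M → M) (hf : ∀ k (a : R) v, f k (a • v) = a • f k v)
    (c : ℕ → R) (a : R) (x y : ℕ → M) (h0 : x 0 = a • y 0)
    (hx : ∀ k, x (k + 1) = c k • f k (x k)) (hy : ∀ k, y (k + 1) = f k (y k)) (k : ℕ) :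
    x k = (a * ∏ j ∈ range k, c j) • y k := by
  induction k with
  | zero => simpa using h0
  | succ k ih =>
    rw [hx, ih, hf, hy, smul_smul, prod_range_succ, mul_comm (c k), mul_assoc]

theorem prod_range_sub_eq_prod_Icc {R : Type*} [CommMonoid R] (g : ℕ → R) (L l : ℕ) :
    ∏ j ∈ range (L - l), g (L - j) = ∏ i ∈ Icc (l + 1) L, g i :=
  prod_nbij' (fun j => L - j) (fun i => L - i)
    (fun j hj => by simp only [mem_range, mem_Icc] at *; omega)
    (fun i hi => by simp only [mem_range, mem_Icc] at *; omega)
    (fun j hj => by simp only [mem_range] at hj; omega)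
    (fun i hi => by simp only [mem_Icc] at hi; omega)
    (fun _ _ => rfl)

theorem hadamard_mulVec_smul {m n R : Type*} [Fintype n] [CommSemiring R]
    (g : m → R) (A : Matrix m n R) (a : R) (v : n → R) :
    (fun i => g i * (A *ᵥ (a • v)) i) = a • fun i => g i * (A *ᵥ v) i := by
  funext i
  simp only [mulVec_smul, Pi.smul_apply, smul_eq_mul]
  ring

theorem pc_single_shot_sequential_inference_general (d L : ℕ)
    (W : ℕ → Matrix (Fin d) (Fin d) ℝ) (γ : ℕ → ℝ)
    (φ dφ : ℝ → ℝ)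
    (v0 : ℕ → Fin d → ℝ) (y : Fin d → ℝ)
    (D : ℕ → Fin d → ℝ)
    (hD0 : D 0 = -(y - W L *ᵥ fun i => φ (v0 (L - 1) i)))
    (hDs : ∀ k, D (k + 1) = fun i => dφ (v0 (L - (k + 1)) i) * (((W (L - k))ᵀ *ᵥ D k) i))
    (E : ℕ → Fin d → ℝ)
    (hE0 : E 0 = y - W L *ᵥ fun i => φ (v0 (L - 1) i))
    (hEs : ∀ k, E (k + 1) =
      γ (L - k) • fun i => dφ (v0 (L - (k + 1)) i) * (((W (L - k))ᵀ *ᵥ E k) i)) :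
    ∀ l < L, E (L - l) = -(∏ i ∈ Finset.Icc (l + 1) L, γ i) • D (L - l) := by
  intro l _
  have h0 : E 0 = (-1 : ℝ) • D 0 := by rw [hD0, hE0, neg_one_smul, neg_neg]
  rw [smul_eq_prod_smul_of_homogeneous_recursion
      (fun k v i => dφ (v0 (L - (k + 1)) i) * (((W (L - k))ᵀ *ᵥ v) i))
      (fun _ a v => hadamard_mulVec_smul _ _ a v) (fun k => γ (L - k)) (-1) E D h0 hEs hDs,
    prod_range_sub_eq_prod_Icc, neg_one_mul]

/-- **Single-shot sequential inference with forward initialization.**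
With F-ini (`v_{l,0} = u_{l,0}`, so `e_{l,0} = 0` for `l < L`) and one sequential inference
sweep from the output layer downward, the state change satisfies
`v_{l,1} - v_{l,0} = -(∏_{i=l+1}^{L} γ_i) δ_l` for all `l < L`.
Here `D k` is the backpropagated signal `δ_{L-k}` (with `δ_L = -(y - W_L φ(v_{L-1,0}))`,
`δ_l = φ'(v_{l,0}) ∘ W_{l+1}ᵀ δ_{l+1}`), and `E k` is the state change `v_{L-k,1} - v_{L-k,0}`
produced by the sequential PC update
`v_{l,1} = v_{l,0} + γ_{l+1} φ'(v_{l,0}) ∘ W_{l+1}ᵀ e_{l+1,1}` with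
`e_{L,1}` given by the gradient of the squared loss. -/
theorem pc_single_shot_sequential_inference (d L : ℕ) (hL : 1 ≤ L)
    (W : ℕ → Matrix (Fin d) (Fin d) ℝ) (γ : ℕ → ℝ)
    (φ dφ : ℝ → ℝ) (hφ : ∀ t : ℝ, HasDerivAt φ (dφ t) t)
    (v0 : ℕ → Fin d → ℝ) (y : Fin d → ℝ)
    (D : ℕ → Fin d → ℝ)
    (hD0 : D 0 = -(y - W L *ᵥ fun i => φ (v0 (L - 1) i)))
    (hDs : ∀ k, D (k + 1) = fun i => dφ (v0 (L - (k + 1)) i) * (((W (L - k))ᵀ *ᵥ D k) i))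
    (E : ℕ → Fin d → ℝ)
    (hE0 : E 0 = y - W L *ᵥ fun i => φ (v0 (L - 1) i))
    (hEs : ∀ k, E (k + 1) =
      γ (L - k) • fun i => dφ (v0 (L - (k + 1)) i) * (((W (L - k))ᵀ *ᵥ E k) i)) :
    ∀ l < L, E (L - l) = -(∏ i ∈ Finset.Icc (l + 1) L, γ i) • D (L - l) :=
  pc_single_shot_sequential_inference_general d L W γ φ dφ v0 y D hD0 hDs E hE0 hEs
end

section
/- (PC = damped GN for the input layer of a deep linear network, general form) In the $L$-layer linear network PC fixed point, the input-layer error can be written as $e_1^* = \frac{\gamma_L}{\gamma_1} W_{L:2}^\top (I + C_\gamma)^{-1}(y - W_{L:1}x)$. When $L = 2$ this equals $(W_2^\top W_2 + \frac{\gamma_1}{\gamma_2}I)^{-1} W_2^\top(y - W_2 W_1 x)$, i.e., a Gauss-Newton update with damping $\rho = \gamma_1/\gamma_2$; but for $L \ge 3$ with generic weights, $e_1^*$ is generally NOT of the form $(W_{L:2}^\top W_{L:2} + \rho I)^{-1} W_{L:2}^\top(y - W_{L:1}x)$ for any scalar $\rho$, because $C_\gamma$ contains cross terms $\frac{\gamma_L}{\gamma_{i-1}}W_{L:i}W_{L:i}^\top$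 for $2 < i \le L$. Formally: there exist $3$-layer linear networks (explicit $1\times 1$ or $2\times 2$ weight choices) and $\gamma$'s for which no $\rho \ge 0$ makes the two expressions equal. -/
/-!
For `L = 2` the claim is the push-through identity `(1 + B A)⁻¹ B = B (1 + A B)⁻¹` (the two
inverted matrices are simultaneously invertible by the Weinstein–Aronszajn identity), after
pulling the scalar `c = γ₂/γ₁` into the inverse: `c (1 + c M)⁻¹ = (M + c⁻¹)⁻¹`.
For `L = 3` take `W₃W₂ = 1`: then the Gauss-Newton step is a scalar multiple of the residual,
whereas `C_γ` still contains the cross term `W₃W₃ᵀ`, which is not a scalar matrix.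
-/

open Matrix

namespace Matrix

variable {m n α : Type*} [Fintype m] [Fintype n] [DecidableEq m] [DecidableEq n]

theorem inv_one_add_mul_mul_comm [CommRing α] (A : Matrix m n α) (B : Matrix n m α) :
    (1 + B * A)⁻¹ * B = B * (1 + A * B)⁻¹ := by
  by_cases hAB : IsUnit (1 + A * B).det
  · have hBA : IsUnit (1 + B * A).det := by rwa [← det_one_add_mul_comm]
    have intertwine : (1 + B * A) * B = B * (1 + A * B) := by
      simp only [Matrix.add_mul, Matrix.mul_add, Matrix.one_mul, Matrix.mul_one, Matrix.mul_assoc]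
    calc (1 + B * A)⁻¹ * B = (1 + B * A)⁻¹ * (B * (1 + A * B) * (1 + A * B)⁻¹) := by
          rw [Matrix.mul_assoc B, mul_nonsing_inv _ hAB, Matrix.mul_one]
      _ = (1 + B * A)⁻¹ * (1 + B * A) * B * (1 + A * B)⁻¹ := by
          rw [← intertwine]; simp only [Matrix.mul_assoc]
      _ = B * (1 + A * B)⁻¹ := by rw [nonsing_inv_mul _ hBA, Matrix.one_mul]
  · have hBA : ¬IsUnit (1 + B * A).det := by rwa [← det_one_add_mul_comm]
    rw [nonsing_inv_apply_not_isUnit _ hAB, nonsing_inv_apply_not_isUnit _ hBA,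
      Matrix.zero_mul, Matrix.mul_zero]

theorem inv_smul_of_ne_zero [Field α] (A : Matrix n n α) {k : α} (hk : k ≠ 0) :
    (k • A)⁻¹ = k⁻¹ • A⁻¹ := by
  by_cases hA : IsUnit A.det
  · exact inv_smul' A (Units.mk0 k hk) hA
  · have hkA : ¬IsUnit (k • A).det := by
      rw [det_smul]
      exact fun h => hA (isUnit_of_mul_isUnit_right h)
    rw [nonsing_inv_apply_not_isUnit _ hA, nonsing_inv_apply_not_isUnit _ hkA, smul_zero]

theorem smul_inv_one_add_smul [Field α] (A : Matrix n n α) {c : α} (hc : c ≠ 0) :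
    c • (1 + c • A)⁻¹ = (A + c⁻¹ • 1)⁻¹ := by
  have : A + c⁻¹ • 1 = c⁻¹ • (1 + c • A) := by
    rw [smul_add, smul_smul, inv_mul_cancel₀ hc, one_smul, add_comm]
  rw [this, inv_smul_of_ne_zero _ (inv_ne_zero hc), inv_inv]

theorem inv_diagonal_of_ne_zero [Field α] {v : n → α} (hv : ∀ i, v i ≠ 0) :
    (diagonal v)⁻¹ = diagonal v⁻¹ :=
  inv_eq_left_inv (by rw [diagonal_mul_diagonal, ← diagonal_one]; simp [hv])

theorem smul_transpose_mulVec_inv_one_add_smul_mul_transpose [Field α] (W : Matrix m n α)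
    {c : α} (hc : c ≠ 0) (r : m → α) :
    c • (Wᵀ *ᵥ ((1 + c • (W * Wᵀ))⁻¹ *ᵥ r)) = (Wᵀ * W + c⁻¹ • 1)⁻¹ *ᵥ (Wᵀ *ᵥ r) := by
  calc c • (Wᵀ *ᵥ ((1 + c • (W * Wᵀ))⁻¹ *ᵥ r))
      = (c • (Wᵀ * (1 + (c • W) * Wᵀ)⁻¹)) *ᵥ r := by
        rw [smul_mul, smul_mulVec, mulVec_mulVec]
    _ = (c • (1 + c • (Wᵀ * W))⁻¹ * Wᵀ) *ᵥ r := by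
        rw [← inv_one_add_mul_mul_comm, Matrix.mul_smul, Matrix.smul_mul]
    _ = (Wᵀ * W + c⁻¹ • 1)⁻¹ *ᵥ (Wᵀ *ᵥ r) := by
        rw [smul_inv_one_add_smul _ hc, mulVec_mulVec]

end Matrix

/-- **PC = damped GN for the input layer only in the shallow case.**
(a) For `L = 2`, the PC fixed-point input-layer error
`(γ₂/γ₁) W₂ᵀ (I + (γ₂/γ₁) W₂W₂ᵀ)⁻¹ (y - W₂W₁x)` equals the damped Gauss-Newton update
`(W₂ᵀW₂ + (γ₁/γ₂) I)⁻¹ W₂ᵀ (y - W₂W₁x)` (damping `ρ = γ₁/γ₂`).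
(b) For `L = 3` there exist (2×2) weights, positive `γ`'s, and data for which no damping
`ρ ≥ 0` makes the PC fixed-point error
`(γ₃/γ₁) W_{3:2}ᵀ (I + C_γ)⁻¹ (y - W_{3:1}x)` equal to
`(W_{3:2}ᵀ W_{3:2} + ρ I)⁻¹ W_{3:2}ᵀ (y - W_{3:1}x)`, where
`C_γ = (γ₃/γ₂) W₃W₃ᵀ + (γ₃/γ₁) W_{3:2}W_{3:2}ᵀ`. -/
theorem pc_damped_gn_shallow_only :
    (∀ (d0 d1 d2 : ℕ) (W1 : Matrix (Fin d1) (Fin d0) ℝ) (W2 : Matrix (Fin d2) (Fin d1) ℝ)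
        (γ1 γ2 : ℝ), 0 < γ1 → 0 < γ2 → ∀ (x : Fin d0 → ℝ) (y : Fin d2 → ℝ),
      (γ2 / γ1) • (W2ᵀ *ᵥ
          (((1 : Matrix (Fin d2) (Fin d2) ℝ) + (γ2 / γ1) • (W2 * W2ᵀ))⁻¹ *ᵥ
            (y - W2 *ᵥ (W1 *ᵥ x)))) =
        (W2ᵀ * W2 + (γ1 / γ2) • (1 : Matrix (Fin d1) (Fin d1) ℝ))⁻¹ *ᵥ
          (W2ᵀ *ᵥ (y - W2 *ᵥ (W1 *ᵥ x)))) ∧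
    (∃ (W1 W2 W3 : Matrix (Fin 2) (Fin 2) ℝ) (γ1 γ2 γ3 : ℝ) (x y : Fin 2 → ℝ),
      0 < γ1 ∧ 0 < γ2 ∧ 0 < γ3 ∧
      ∀ ρ : ℝ, 0 ≤ ρ →
        (γ3 / γ1) • ((W3 * W2)ᵀ *ᵥ
            (((1 : Matrix (Fin 2) (Fin 2) ℝ) + (γ3 / γ2) • (W3 * W3ᵀ) +
                (γ3 / γ1) • ((W3 * W2) * (W3 * W2)ᵀ))⁻¹ *ᵥ
              (y - (W3 * W2 * W1) *ᵥ x))) ≠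
          ((W3 * W2)ᵀ * (W3 * W2) + ρ • (1 : Matrix (Fin 2) (Fin 2) ℝ))⁻¹ *ᵥ
            ((W3 * W2)ᵀ *ᵥ (y - (W3 * W2 * W1) *ᵥ x))) := by
  refine ⟨fun d0 d1 d2 W1 W2 γ1 γ2 hγ1 hγ2 x y => ?_, ?_⟩
  · rw [← inv_div γ2 γ1]
    exact smul_transpose_mulVec_inv_one_add_smul_mul_transpose W2 (div_pos hγ2 hγ1).ne' _
  · -- `W₃W₂ = 1`, so the Gauss-Newton step is `(1 + ρ)⁻¹ • y` while the PC error is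
    -- `diag(6, 3)⁻¹ *ᵥ y`, which is not parallel to `y = ![1, 1]`.
    refine ⟨0, diagonal ![2⁻¹, 1], diagonal ![2, 1], 1, 1, 1, 0, ![1, 1],
      one_pos, one_pos, one_pos, fun ρ hρ h => ?_⟩
    simp only [diagonal_transpose, diagonal_mul_diagonal, ← diagonal_one, ← diagonal_smul,
      diagonal_add, Matrix.mul_zero, zero_mulVec, sub_zero] at h
    rw [inv_diagonal_of_ne_zero, inv_diagonal_of_ne_zero] at h
    · have h0 := congrFun h 0
      have h1 := congrFun h 1
      norm_num [mulVec_diagonal] at h0 h1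
      rw [← h0] at h1
      norm_num at h1
    all_goals intro i; fin_cases i <;> norm_num
    all_goals positivity
end
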